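/- Suppose SSet is equipped with a model category structure in which the cofibrations are exactly the monomorphisms. Then for every n ≥ 0, the pushout-product ({0} ↪ J) □ (∂Δ[n] ↪ Δ[n]) is a trivial cofibration (a cofibration which is also a weak equivalence) in this model structure. -/

import Mathlib

open CategoryTheory Simplicial Opposite Limits

namespace Paper

/-! ## The simplicial set `J`, nerve of the free-living isomorphism -/

/-- The simplicial set `J`, the nerve of the free-living isomorphism `𝕀`:
its `n`-simplices are the tuples `{0,1}^(n+1)` (recorded as `Bool`-valued functions,
`false` being the vertex `0` and `true` the vertex `1`), with all simplicial
operators acting by reindexing. -/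
def J : SSet.{0} where
  obj m := Fin (m.unop.len + 1) → Bool
  map f := TypeCat.ofHom (fun a => a ∘ f.unop.toOrderHom)
  map_id _ := rfl
  map_comp _ _ := rfl

/-- The two vertices `0, 1 : Δ[0] ⟶ J` of `J`; `ptJ false` is the vertex `0` and
`ptJ true` is the vertex `1`. -/
def ptJ (b : Bool) : Δ[0] ⟶ J where
  app _ := TypeCat.ofHom (fun _ => fun _ => b)
  naturality _ _ _ := rfl

/-- The boundary `∂J = {0} ∪ {1}` of `J` (two discrete points). -/
def bJ : SSet.{0} where
  obj _ := Bool
  map _ := TypeCat.ofHom (fun b => b)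
  map_id _ := rfl
  map_comp _ _ := rfl

/-- The inclusion `∂J ↪ J`. -/
def bJIncl : bJ ⟶ J where
  app _ := TypeCat.ofHom (fun b => fun _ => b)
  naturality _ _ _ := rfl

/-! ## Binary products and pushout-products -/

/-- The (pointwise) product of two simplicial sets. -/
def sprod (X Y : SSet.{0}) : SSet.{0} where
  obj m := X.obj m × Y.obj m
  map f := TypeCat.ofHom (fun (p : X.obj _ × Y.obj _) => (X.map f p.1, Y.map f p.2))
  map_id m := by
    ext p
    · exact FunctorToTypes.map_id_apply X p.1
    · exact FunctorToTypes.map_id_apply Y p.2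
  map_comp f g := by
    ext p
    · exact FunctorToTypes.map_comp_apply X f g p.1
    · exact FunctorToTypes.map_comp_apply Y f g p.2

/-- The product of two morphisms of simplicial sets. -/
def sprodMap {X X' Y Y' : SSet.{0}} (f : X ⟶ X') (g : Y ⟶ Y') : sprod X Y ⟶ sprod X' Y' where
  app m := TypeCat.ofHom (fun (p : X.obj m × Y.obj m) => (f.app m p.1, g.app m p.2))
  naturality m m' φ := by
    ext p
    refine Prod.ext ?_ ?_
    · exact NatTrans.naturality_apply f φ p.1
    · exact NatTrans.naturality_apply g φ p.2

/-- The pushout-product `f □ g : (A × Z) ∪ (B × W) ⟶ B × Z` of `f : A ⟶ B` and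
`g : W ⟶ Z`, the domain being presented as the pushout `(A × Z) ∪_{A × W} (B × W)`. -/
noncomputable def pp {A B W Z : SSet.{0}} (f : A ⟶ B) (g : W ⟶ Z) :
    pushout (sprodMap (𝟙 A) g) (sprodMap f (𝟙 W)) ⟶ sprod B Z :=
  pushout.desc (sprodMap f (𝟙 Z)) (sprodMap (𝟙 B) g) rfl

/-! ## Saturated classes of morphisms -/

/-- A class of morphisms is stable under retracts if, whenever `f` is a retract of `g`
in the arrow category, membership of `g` implies membership of `f`. -/
def StableUnderRetracts (T : MorphismProperty SSet.{0}) : Prop :=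
  ∀ ⦃X Y X' Y' : SSet.{0}⦄ (f : X ⟶ Y) (g : X' ⟶ Y')
    (i : Arrow.mk f ⟶ Arrow.mk g) (r : Arrow.mk g ⟶ Arrow.mk f),
    i ≫ r = 𝟙 _ → T g → T f

/-- The inclusion functor `Set.Iio i ⥤ ι`. -/
def iioFunctor {ι : Type} [Preorder ι] (i : ι) : Set.Iio i ⥤ ι :=
  Monotone.functor (f := Subtype.val) (fun _ _ h => h)

/-- The cocone on the restriction of `F : ι ⥤ SSet` to `Set.Iio i` with apex `F.obj i`. -/
def restrictionCocone {ι : Type} [Preorder ι] (F : ι ⥤ SSet.{0}) (i : ι) :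
    Cocone (iioFunctor i ⋙ F) where
  pt := F.obj i
  ι :=
    { app := fun j => F.map (homOfLE j.2.le)
      naturality := fun j k h => by
        dsimp [iioFunctor]
        rw [← F.map_comp, Category.comp_id]
        congr 1 }

/-- A class of morphisms is stable under transfinite composition if, for every
well-ordered type `ι` and every functor `F : ι ⥤ SSet` which is continuous at limit
stages and whose successor maps `F.obj i ⟶ F.obj (i+1)` all belong to the class, and
every colimit cocone `c` on `F`, the transfinite composite `F.obj ⊥ ⟶ c.pt` belongs to
the class. -/
def StableUnderTransfiniteComposition (T : MorphismProperty SSet.{0}) : Prop :=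
  ∀ (ι : Type) [LinearOrder ι] [SuccOrder ι] [OrderBot ι] [WellFoundedLT ι]
    (F : ι ⥤ SSet.{0}),
    (∀ i : ι, ¬IsMax i → T (F.map (homOfLE (Order.le_succ i)))) →
    (∀ i : ι, Order.IsSuccLimit i → Nonempty (IsColimit (restrictionCocone F i))) →
    ∀ (c : Cocone F), IsColimit c → T (c.ι.app ⊥)

/-- A class of morphisms of simplicial sets is saturated if it is closed under
isomorphisms, pushouts, transfinite compositions, and retracts. -/
structure IsSaturated (T : MorphismProperty SSet.{0}) : Prop where
  respectsIso : T.RespectsIso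
  stableUnderCobaseChange : T.IsStableUnderCobaseChange
  stableUnderRetracts : StableUnderRetracts T
  stableUnderTransfiniteComposition : StableUnderTransfiniteComposition T

/-- The saturated closure of a class of morphisms: the smallest saturated class
containing it. -/
def satClosure (S : MorphismProperty SSet.{0}) : MorphismProperty SSet.{0} :=
  fun _ _ f => ∀ T : MorphismProperty SSet.{0}, IsSaturated T → S ≤ T → T f

/-! ## Subcomplexes -/

/-- A subcomplex of a simplicial set. -/
structure Sub (X : SSet.{0}) where
  carrier : ∀ m, Set (X.obj m)
  map_mem : ∀ ⦃m m' : SimplexCategoryᵒᵖ⦄ (f : m ⟶ m') ⦃σ : X.obj m⦄,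
    σ ∈ carrier m → X.map f σ ∈ carrier m'

/-- The simplicial set underlying a subcomplex. -/
def Sub.toSSet {X : SSet.{0}} (S : Sub X) : SSet.{0} where
  obj m := S.carrier m
  map f := TypeCat.ofHom (fun σ => ⟨X.map f σ.1, S.map_mem f σ.2⟩)
  map_id m := by
    ext σ
    exact FunctorToTypes.map_id_apply X σ.1
  map_comp f g := by
    ext σ
    exact FunctorToTypes.map_comp_apply X f g σ.1

/-- The inclusion of a subcomplex. -/
def Sub.ι {X : SSet.{0}} (S : Sub X) : S.toSSet ⟶ X where
  app _ := TypeCat.ofHom (fun σ => σ.1)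
  naturality _ _ _ := rfl

/-- Containment of subcomplexes. -/
def Sub.Le {X : SSet.{0}} (S T : Sub X) : Prop := ∀ m, S.carrier m ⊆ T.carrier m

/-- The inclusion map associated to a containment of subcomplexes. -/
def Sub.homOfLe {X : SSet.{0}} {S T : Sub X} (h : S.Le T) : S.toSSet ⟶ T.toSSet where
  app m := TypeCat.ofHom (fun σ => ⟨σ.1, h m σ.2⟩)
  naturality _ _ _ := rfl

/-- The union of two subcomplexes. -/
def Sub.union {X : SSet.{0}} (S T : Sub X) : Sub X where
  carrier m := S.carrier m ∪ T.carrier m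
  map_mem _ _ f _ h := h.imp (fun hs => S.map_mem f hs) (fun ht => T.map_mem f ht)

/-- The intersection of two subcomplexes. -/
def Sub.inter {X : SSet.{0}} (S T : Sub X) : Sub X where
  carrier m := S.carrier m ∩ T.carrier m
  map_mem _ _ f _ h := ⟨S.map_mem f h.1, T.map_mem f h.2⟩

/-- A subcomplex `S` of `X`, viewed as a subcomplex of (the simplicial set underlying)
another subcomplex `T` of `X`. -/
def Sub.restrict {X : SSet.{0}} (T S : Sub X) : Sub T.toSSet where
  carrier m := setOf (fun σ : T.carrier m => σ.1 ∈ S.carrier m)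
  map_mem _ _ f _ h := S.map_mem f h

/-- The (dimension zero) object of `SimplexCategoryᵒᵖ` indexing vertices. -/
abbrev V0 : SimplexCategoryᵒᵖ := Opposite.op (SimplexCategory.mk 0)

/-- The full subcomplex of `X` on a set `ν` of vertices: the simplices all of whose
vertices lie in `ν`. -/
def fullSub (X : SSet.{0}) (ν : Set (X.obj V0)) : Sub X where
  carrier m := {σ | ∀ g : SimplexCategory.mk 0 ⟶ m.unop, X.map g.op σ ∈ ν}
  map_mem := by
    intro m m' f σ hσ g
    rw [← FunctorToTypes.map_comp_apply]
    exact hσ (g ≫ f.unop)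

/-! ## Widenings and widened inclusions -/

/-- The widening `W_ν(X)` of `X` at a set `ν` of vertices: the full subcomplex of
`J × X` on the vertex set `({0} × X₀) ∪ ({1} × ν)`. -/
def wideSub (X : SSet.{0}) (ν : Set (X.obj V0)) : Sub (sprod J X) :=
  fullSub (sprod J X) (setOf fun p : J.obj V0 × X.obj V0 => p.1 0 = true → p.2 ∈ ν)

/-- The subcomplex `{0} × X` of `J × X` (the full subcomplex on the vertices
`{0} × X₀`). -/
def zeroSlice (X : SSet.{0}) : Sub (sprod J X) :=
  fullSub (sprod J X) (setOf fun p : J.obj V0 × X.obj V0 => p.1 0 = false)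

/-- For `A` a subcomplex of `Y`, the subcomplex `J × A` of `J × Y`. -/
def Sub.prodJ {Y : SSet.{0}} (A : Sub Y) : Sub (sprod J Y) where
  carrier m := setOf (fun p : J.obj m × Y.obj m => p.2 ∈ A.carrier m)
  map_mem _ _ f _ h := A.map_mem f h

/-- Given a subcomplex (inclusion) `A = X ⊆ Y` and a set `ν` of vertices of `Y`, the
subcomplex `({0} × Y) ∪ W_{ν ∩ X₀}(X)` of `J × Y`: the domain of the inclusion
`X ↪ Y` widened at `ν`. -/
def widenedSub (Y : SSet.{0}) (A : Sub Y) (ν : Set (Y.obj V0)) : Sub (sprod J Y) :=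
  (zeroSlice Y).union ((wideSub Y (ν ∩ A.carrier V0)).inter A.prodJ)

lemma zeroSlice_le_wideSub (Y : SSet.{0}) (ν : Set (Y.obj V0)) :
    (zeroSlice Y).Le (wideSub Y ν) := by
  intro m σ hσ g h
  exact absurd (hσ g) (fun h' => by change _ = false at h'; exact Bool.noConfusion (h.symm.trans h'))

lemma wideSub_mono (Y : SSet.{0}) {ν ν' : Set (Y.obj V0)} (h : ν ⊆ ν') :
    (wideSub Y ν).Le (wideSub Y ν') :=
  fun _ σ hσ g ht => h (hσ g ht)

lemma widenedSub_le (Y : SSet.{0}) (A : Sub Y) (ν : Set (Y.obj V0)) :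
    (widenedSub Y A ν).Le (wideSub Y ν) := by
  refine fun m σ hσ => Or.elim hσ (fun h => ?_) (fun h => ?_)
  · exact zeroSlice_le_wideSub Y ν m h
  · exact wideSub_mono Y Set.inter_subset_left m h.1

/-- The inclusion `X ↪ Y` widened at `ν`: the inclusion
`({0} × Y) ∪ W_{ν ∩ X₀}(X) ↪ W_ν(Y)`. -/
def widenedIncl (Y : SSet.{0}) (A : Sub Y) (ν : Set (Y.obj V0)) :
    (widenedSub Y A ν).toSSet ⟶ (wideSub Y ν).toSSet :=
  Sub.homOfLe (widenedSub_le Y A ν)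

/-- `Wide`: the class of all widened inclusions. -/
def Wide : MorphismProperty SSet.{0} := fun _ _ h =>
  ∃ (Y : SSet.{0}) (A : Sub Y) (ν : Set (Y.obj V0)),
    Arrow.mk h = Arrow.mk (widenedIncl Y A ν)

/-- `Wide^(1)`: the class of inclusions widened at a single vertex. -/
def Wide1 : MorphismProperty SSet.{0} := fun _ _ h =>
  ∃ (Y : SSet.{0}) (A : Sub Y) (v : Y.obj V0),
    Arrow.mk h = Arrow.mk (widenedIncl Y A {v})

/-! ## Narrow vertices -/

/-- A vertex `v` of `Y` is narrow if every simplex of `Y` has at most one vertex equal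
to `v`. -/
def Narrow (Y : SSet.{0}) (v : Y.obj V0) : Prop :=
  ∀ ⦃m : SimplexCategoryᵒᵖ⦄ (σ : Y.obj m) (g g' : SimplexCategory.mk 0 ⟶ m.unop),
    Y.map g.op σ = v → Y.map g'.op σ = v → g = g'

/-- `Wide_nar`: the class of inclusions widened at a narrow set of vertices. -/
def WideNar : MorphismProperty SSet.{0} := fun _ _ h =>
  ∃ (Y : SSet.{0}) (A : Sub Y) (ν : Set (Y.obj V0)),
    (∀ v ∈ ν, Narrow Y v) ∧ Arrow.mk h = Arrow.mk (widenedIncl Y A ν)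

/-- `Wide_nar^(1)`: the class of inclusions widened at a single narrow vertex. -/
def WideNar1 : MorphismProperty SSet.{0} := fun _ _ h =>
  ∃ (Y : SSet.{0}) (A : Sub Y) (v : Y.obj V0),
    Narrow Y v ∧ Arrow.mk h = Arrow.mk (widenedIncl Y A {v})

/-! ## Standard simplices, boundaries, skeleta, iso-horns -/

/-- The unique map to the terminal simplicial set `Δ[0]`. -/
def toPt (X : SSet.{0}) : X ⟶ Δ[0] where
  app m := TypeCat.ofHom (fun _ => SSet.stdSimplex.const 0 0 m)
  naturality m m' f := by
    ext x
    apply SSet.stdSimplex.objEquiv.injective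
    apply SimplexCategory.Hom.ext
    apply OrderHom.ext
    funext j
    exact Subsingleton.elim (α := Fin 1) _ _

/-- The `i`-th vertex of the standard simplex `Δ[n]`. -/
def vrt (n : ℕ) (i : Fin (n + 1)) : Δ[n].obj V0 :=
  SSet.stdSimplex.const n i V0

/-- The boundary `∂Δ[n]`, as a subcomplex of `Δ[n]`: the simplices which are not
surjective as monotone maps. -/
def bSub (n : ℕ) : Sub Δ[n] where
  carrier m := {σ | ¬Function.Surjective (SSet.stdSimplex.asOrderHom σ)}
  map_mem _ _ f σ hσ h := hσ (Function.Surjective.of_comp h)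

/-- The `k`-skeleton of `Y`, as a subcomplex: the simplices which factor through some
simplex of dimension at most `k`. -/
def skSub (Y : SSet.{0}) (k : ℕ) : Sub Y where
  carrier m := {σ | ∃ (j : ℕ) (_ : j ≤ k) (f : m.unop ⟶ SimplexCategory.mk j)
    (τ : Y.obj (Opposite.op (SimplexCategory.mk j))), Y.map f.op τ = σ}
  map_mem := by
    rintro m m' φ σ ⟨j, hj, f, τ, rfl⟩
    exact ⟨j, hj, φ.unop ≫ f, τ, by rw [← FunctorToTypes.map_comp_apply]; rfl⟩

/-- A `k`-simplex is nondegenerate if it admits no factorization through a simplex of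
strictly smaller dimension. -/
def Nondegenerate (Y : SSet.{0}) {k : ℕ} (σ : Y.obj (Opposite.op (SimplexCategory.mk k))) :
    Prop :=
  ∀ (j : ℕ) (f : SimplexCategory.mk k ⟶ SimplexCategory.mk j)
    (τ : Y.obj (Opposite.op (SimplexCategory.mk j))), Y.map f.op τ = σ → k ≤ j

/-- The iso-horn inclusion `𝕍_i[m+1] ↪ ∇̄_i[m+1]`: the boundary inclusion
`∂Δ[m] ↪ Δ[m]` widened at the single vertex `i`, i.e. the inclusion
`({0} × Δ[m]) ∪ W_i(∂Δ[m]) ↪ W_i(Δ[m])` of the iso-horn into the isoplex. -/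
def isoHornIncl (m : ℕ) (i : Fin (m + 1)) :
    (widenedSub Δ[m] (bSub m) {vrt m i}).toSSet ⟶ (wideSub Δ[m] {vrt m i}).toSSet :=
  widenedIncl Δ[m] (bSub m) {vrt m i}

/-- `IsoHorn`: the class of all iso-horn inclusions. -/
def IsoHorn : MorphismProperty SSet.{0} := fun _ _ h =>
  ∃ (m : ℕ) (i : Fin (m + 1)), Arrow.mk h = Arrow.mk (isoHornIncl m i)

/-! ## The classes `({0} ↪ J) □ Bdry` and `({0} ↪ J) □ Mono` -/

/-- The class `({0} ↪ J) □ Bdry` of pushout-products of the vertex `0 : Δ[0] ⟶ J`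
with the boundary inclusions `∂Δ[n] ↪ Δ[n]`. -/
def ppJ0Bdry : MorphismProperty SSet.{0} := fun _ _ h =>
  ∃ n : ℕ, Arrow.mk h = Arrow.mk (pp (ptJ false) (SSet.boundary.{0} n).ι)

/-- The class `({0} ↪ J) □ Mono` of pushout-products of the vertex `0 : Δ[0] ⟶ J`
with all monomorphisms of simplicial sets. -/
def ppJ0Mono : MorphismProperty SSet.{0} := fun _ _ h =>
  ∃ (W Z : SSet.{0}) (g : W ⟶ Z), Mono g ∧ Arrow.mk h = Arrow.mk (pp (ptJ false) g)


/-- A model category structure on `SSet`: classes of weak equivalences, cofibrations and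
fibrations satisfying the model category axioms (two-out-of-three, retract stability,
lifting, and factorization). -/
structure ModelStructure where
  /-- the weak equivalences -/
  weq : MorphismProperty SSet.{0}
  /-- the cofibrations -/
  cof : MorphismProperty SSet.{0}
  /-- the fibrations -/
  fib : MorphismProperty SSet.{0}
  weq_comp : ∀ ⦃X Y Z : SSet.{0}⦄ (f : X ⟶ Y) (g : Y ⟶ Z), weq f → weq g → weq (f ≫ g)
  weq_of_comp_left : ∀ ⦃X Y Z : SSet.{0}⦄ (f : X ⟶ Y) (g : Y ⟶ Z),
    weq f → weq (f ≫ g) → weq g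
  weq_of_comp_right : ∀ ⦃X Y Z : SSet.{0}⦄ (f : X ⟶ Y) (g : Y ⟶ Z),
    weq g → weq (f ≫ g) → weq f
  weq_retract : StableUnderRetracts weq
  cof_retract : StableUnderRetracts cof
  fib_retract : StableUnderRetracts fib
  lift_trivCof_fib : ∀ ⦃A B X Y : SSet.{0}⦄ (i : A ⟶ B) (p : X ⟶ Y),
    cof i → weq i → fib p → HasLiftingProperty i p
  lift_cof_trivFib : ∀ ⦃A B X Y : SSet.{0}⦄ (i : A ⟶ B) (p : X ⟶ Y),
    cof i → fib p → weq p → HasLiftingProperty i p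
  factor_cof_trivFib : ∀ ⦃X Y : SSet.{0}⦄ (f : X ⟶ Y),
    ∃ (Z : SSet.{0}) (i : X ⟶ Z) (p : Z ⟶ Y), cof i ∧ fib p ∧ weq p ∧ i ≫ p = f
  factor_trivCof_fib : ∀ ⦃X Y : SSet.{0}⦄ (f : X ⟶ Y),
    ∃ (Z : SSet.{0}) (i : X ⟶ Z) (p : Z ⟶ Y), cof i ∧ weq i ∧ fib p ∧ i ≫ p = f

/-!
A map to `J` is just a `Bool`-colouring of vertices, so `J` is an injective object and the
projection `J × Z ⟶ Z` lifts against every monomorphism: it is a trivial fibration.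
Since `{b} × Z ⟶ J × Z ⟶ Z` is an isomorphism, the slice `{b} × Z ⟶ J × Z` is a weak
equivalence by two-out-of-three. Precomposing `({b} ↪ J) □ g` with the pushout of the slice
over `W` gives the slice over `Z`, and pushouts of trivial cofibrations are weak equivalences,
so `({b} ↪ J) □ g` is a weak equivalence for every `g`. It is a monomorphism because its
domain is the union of `{b} × Z` and `J × W` over their intersection `{b} × W`, and `SSet`
is adhesive.
-/

lemma StableUnderRetracts.of_retractArrow {T : MorphismProperty SSet.{0}}
    (hT : StableUnderRetracts T) {X Y X' Y' : SSet.{0}} {f : X ⟶ Y} {g : X' ⟶ Y'}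
    (h : RetractArrow f g) (hg : T g) : T f :=
  hT f g h.i h.r h.retract hg

namespace ModelStructure

variable (M : ModelStructure)

lemma cof_weq_of_forall_fib_hasLiftingProperty {A B : SSet.{0}} (f : A ⟶ B)
    (h : ∀ ⦃X Y : SSet.{0}⦄ (p : X ⟶ Y), M.fib p → HasLiftingProperty f p) :
    M.cof f ∧ M.weq f := by
  obtain ⟨Z, i, p, hi_cof, hi_weq, hp, hip⟩ := M.factor_trivCof_fib f
  have := h p hp
  have hr := RetractArrow.ofLeftLiftingProperty hip
  exact ⟨M.cof_retract.of_retractArrow hr hi_cof, M.weq_retract.of_retractArrow hr hi_weq⟩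

lemma fib_weq_of_forall_cof_hasLiftingProperty {X Y : SSet.{0}} (p : X ⟶ Y)
    (h : ∀ ⦃A B : SSet.{0}⦄ (i : A ⟶ B), M.cof i → HasLiftingProperty i p) :
    M.fib p ∧ M.weq p := by
  obtain ⟨Z, i, q, hi, hq_fib, hq_weq, hiq⟩ := M.factor_cof_trivFib p
  have := h i hi
  have hr := RetractArrow.ofRightLiftingProperty hiq
  exact ⟨M.fib_retract.of_retractArrow hr hq_fib, M.weq_retract.of_retractArrow hr hq_weq⟩

lemma weq_of_isIso {X Y : SSet.{0}} (f : X ⟶ Y) [IsIso f] : M.weq f :=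
  (M.cof_weq_of_forall_fib_hasLiftingProperty f fun _ _ _ _ => inferInstance).2

lemma weq_pushout_inl {X Y Z : SSet.{0}} (s : X ⟶ Y) (f : X ⟶ Z) (hf_cof : M.cof f)
    (hf_weq : M.weq f) : M.weq (pushout.inl s f) :=
  (M.cof_weq_of_forall_fib_hasLiftingProperty _ fun _ _ p hp =>
    have := M.lift_trivCof_fib f p hf_cof hf_weq hp
    inferInstance).2

end ModelStructure

instance (m : SimplexCategoryᵒᵖ) : Subsingleton (Δ[0].obj m) :=
  SSet.stdSimplex.objEquiv.subsingleton

def fstMap (X Y : SSet.{0}) : sprod X Y ⟶ X where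
  app _ := TypeCat.ofHom Prod.fst
  naturality _ _ _ := rfl

def sndMap (X Y : SSet.{0}) : sprod X Y ⟶ Y where
  app _ := TypeCat.ofHom Prod.snd
  naturality _ _ _ := rfl

def sprodLift {T X Y : SSet.{0}} (f : T ⟶ X) (g : T ⟶ Y) : T ⟶ sprod X Y where
  app m := TypeCat.ofHom fun t => (f.app m t, g.app m t)
  naturality _ _ φ := by
    ext t
    refine Prod.ext ?_ ?_
    · exact NatTrans.naturality_apply f φ t
    · exact NatTrans.naturality_apply g φ t

lemma mono_iff_injective_app {X Y : SSet.{0}} (f : X ⟶ Y) :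
    Mono f ↔ ∀ m, Function.Injective (f.app m) := by
  simp only [NatTrans.mono_iff_mono_app, mono_iff_injective]

instance mono_sprodMap {X X' Y Y' : SSet.{0}} (f : X ⟶ X') (g : Y ⟶ Y') [Mono f] [Mono g] :
    Mono (sprodMap f g) := by
  have hf := (mono_iff_injective_app f).1 ‹_›
  have hg := (mono_iff_injective_app g).1 ‹_›
  exact (mono_iff_injective_app _).2 fun m => (hf m).prodMap (hg m)

instance mono_of_stdSimplex_zero {X : SSet.{0}} (x : Δ[0] ⟶ X) : Mono x :=
  (mono_iff_injective_app x).2 fun _ _ _ _ => Subsingleton.elim _ _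

instance (Z : SSet.{0}) : IsIso (sndMap Δ[0] Z) := by
  refine (NatTrans.isIso_iff_isIso_app _).2 fun m => (isIso_iff_bijective _).2
    ⟨fun _ _ h => Prod.ext (Subsingleton.elim _ _) h,
      fun z => ⟨(SSet.stdSimplex.const 0 0 m, z), rfl⟩⟩

lemma Adhesive.mono_pushout_desc_of_isPullback {C : Type*} [Category C] [Adhesive C]
    {P A B Z : C} {f : P ⟶ A} {g : P ⟶ B} {a : A ⟶ Z} {b : B ⟶ Z} [Mono a] [Mono b]
    (h : IsPullback f g a b) [HasPushout f g] : Mono (pushout.desc a b h.w) := by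
  have hpushout : IsPushout (pullback.fst a b) (pullback.snd a b)
      (pushout.inl f g) (pushout.inr f g) :=
    (IsPushout.of_hasPushout f g).of_iso h.isoPullback (Iso.refl _) (Iso.refl _) (Iso.refl _)
      (by simp) (by simp) (by simp) (by simp)
  have hdesc : pushout.desc a b h.w =
      hpushout.isoPushout.hom ≫ pushout.desc a b pullback.condition := by
    apply pushout.hom_ext
    · rw [hpushout.inl_isoPushout_hom_assoc, pushout.inl_desc, pushout.inl_desc]
    · rw [hpushout.inr_isoPushout_hom_assoc, pushout.inr_desc, pushout.inr_desc]
  rw [hdesc]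
  infer_instance

lemma isPullback_sprodMap {A B W Z : SSet.{0}} (f : A ⟶ B) (g : W ⟶ Z) :
    IsPullback (sprodMap (𝟙 A) g) (sprodMap f (𝟙 W))
      (sprodMap f (𝟙 Z)) (sprodMap (𝟙 B) g) where
  w := rfl
  isLimit' := ⟨evaluationJointlyReflectsLimits _ fun m => by
    refine (isLimitMapConePullbackConeEquiv _ _).2 (IsPullback.isLimit ?_)
    rw [Types.isPullback_iff]
    refine ⟨rfl, ?_, ?_⟩
    · rintro ⟨a, w⟩ ⟨a', w'⟩ ⟨h₁, h₂⟩
      have ha : a = a' := congrArg Prod.fst h₁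
      have hw : w = w' := congrArg Prod.snd h₂
      rw [ha, hw]
    · rintro ⟨a, z⟩ ⟨b, w⟩ h
      have hb : f.app m a = b := congrArg Prod.fst h
      have hz : z = g.app m w := congrArg Prod.snd h
      exact ⟨(a, w), by rw [hz]; rfl, by rw [← hb]; rfl⟩⟩

lemma pushout_inl_pp {A B W Z : SSet.{0}} (f : A ⟶ B) (g : W ⟶ Z) :
    pushout.inl (sprodMap (𝟙 A) g) (sprodMap f (𝟙 W)) ≫ pp f g = sprodMap f (𝟙 Z) :=
  pushout.inl_desc _ _ _

instance mono_pp {A B W Z : SSet.{0}} (f : A ⟶ B) (g : W ⟶ Z) [Mono f] [Mono g] :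
    Mono (pp f g) :=
  Adhesive.mono_pushout_desc_of_isPullback (isPullback_sprodMap f g)

def toJ {B : SSet.{0}} (φ : B.obj V0 → Bool) : B ⟶ J where
  app m := TypeCat.ofHom fun σ i =>
    φ (B.map (SimplexCategory.const (SimplexCategory.mk 0) m.unop i).op σ)
  naturality m m' f := by
    ext σ
    funext i
    have hconst : f ≫ (SimplexCategory.const (SimplexCategory.mk 0) m'.unop i).op
        = (SimplexCategory.const (SimplexCategory.mk 0) m.unop (f.unop.toOrderHom i)).op :=
      Quiver.Hom.unop_inj (SimplexCategory.const_comp _ f.unop i)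
    change φ (B.map (SimplexCategory.const (SimplexCategory.mk 0) m'.unop i).op (B.map f σ))
      = φ (B.map (SimplexCategory.const (SimplexCategory.mk 0) m.unop
          (f.unop.toOrderHom i)).op σ)
    rw [← Functor.map_comp_apply, hconst]

lemma comp_toJ {A B : SSet.{0}} (m : A ⟶ B) (t : A ⟶ J) (φ : B.obj V0 → Bool)
    (hφ : ∀ a : A.obj V0, φ (m.app V0 a) = t.app V0 a 0) : m ≫ toJ φ = t := by
  ext k a
  funext i
  change φ (B.map (SimplexCategory.const (SimplexCategory.mk 0) k.unop i).op (m.app k a))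
    = t.app k a i
  rw [← NatTrans.naturality_apply, hφ, NatTrans.naturality_apply]
  rfl

instance : Injective J where
  factors {A B} t m _ := by
    classical
    refine ⟨toJ fun v => if h : ∃ a, m.app V0 a = v then t.app V0 h.choose 0 else false,
      comp_toJ m t _ fun a => ?_⟩
    have h : ∃ a', m.app V0 a' = m.app V0 a := ⟨a, rfl⟩
    rw [dif_pos h, (mono_iff_injective_app m).1 ‹_› V0 h.choose_spec]

instance hasLiftingProperty_sndMap {A B I Z : SSet.{0}} [Injective I] (i : A ⟶ B) [Mono i] :
    HasLiftingProperty i (sndMap I Z) where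
  sq_hasLift {f g} sq := by
    obtain ⟨j, hj⟩ := Injective.factors (f ≫ fstMap I Z) i
    refine ⟨⟨⟨sprodLift j g, ?_, rfl⟩⟩⟩
    ext m a
    refine Prod.ext ?_ ?_
    · exact ConcreteCategory.congr_hom (congr_app hj m) a
    · exact (ConcreteCategory.congr_hom (congr_app sq.w m) a).symm

namespace ModelStructure

variable (M : ModelStructure)

lemma weq_sndMap_of_injective (hcof : M.cof = MorphismProperty.monomorphisms SSet.{0})
    (I Z : SSet.{0}) [Injective I] : M.weq (sndMap I Z) :=
  (M.fib_weq_of_forall_cof_hasLiftingProperty _ fun _ _ i hi =>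
    have : Mono i := by rwa [hcof] at hi
    inferInstance).2

lemma weq_sprodMap_ptJ (hcof : M.cof = MorphismProperty.monomorphisms SSet.{0}) (b : Bool)
    (Z : SSet.{0}) : M.weq (sprodMap (ptJ b) (𝟙 Z)) :=
  M.weq_of_comp_right _ (sndMap J Z) (M.weq_sndMap_of_injective hcof J Z)
    (M.weq_of_isIso (sndMap Δ[0] Z))

lemma weq_pp_ptJ (hcof : M.cof = MorphismProperty.monomorphisms SSet.{0}) (b : Bool)
    {W Z : SSet.{0}} (g : W ⟶ Z) : M.weq (pp (ptJ b) g) := by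
  have hcof_slice : M.cof (sprodMap (ptJ b) (𝟙 W)) := by
    rw [hcof]
    exact MorphismProperty.monomorphisms.infer_property _
  refine M.weq_of_comp_left _ _
    (M.weq_pushout_inl (sprodMap (𝟙 Δ[0]) g) _ hcof_slice (M.weq_sprodMap_ptJ hcof b W)) ?_
  rw [pushout_inl_pp]
  exact M.weq_sprodMap_ptJ hcof b Z

end ModelStructure

/-- In any model structure on `SSet` whose cofibrations are exactly the
monomorphisms, the pushout-products `({0} ↪ J) □ (∂Δ[n] ↪ Δ[n])` are trivial
cofibrations. -/
theorem pp_ptJ_boundaryInclusion_trivialCofibration (M : ModelStructure)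
    (hcof : M.cof = MorphismProperty.monomorphisms SSet.{0}) (n : ℕ) :
    M.cof (pp (ptJ false) (SSet.boundary.{0} n).ι) ∧
      M.weq (pp (ptJ false) (SSet.boundary.{0} n).ι) := by
  refine ⟨?_, M.weq_pp_ptJ hcof false _⟩
  rw [hcof]
  exact MorphismProperty.monomorphisms.infer_property _

end Paper
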